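/- arXiv:1810.11139 — 7 statements merged into one kernel-verified Lean document; each statement's English description precedes it below -/
import Mathlib

section
/- Let M and N be commensurable subgroups of a group G. Then Z̃(M ∩ N) = Z̃(M) ∩ Z̃(N) = Z̃(M) ∩ N = Z̃(N) ∩ M. -/
/-!
Since `M ⊓ N` has finite index in `M`, a subgroup has finite index in `M` exactly when it has
finite index in `M ⊓ N`. Applied to centralizers this gives `Z̃(M ⊓ N) = Z̃(M) ∩ N`, and
symmetrically `Z̃(M ⊓ N) = Z̃(N) ∩ M`; intersecting the two yields `Z̃(M) ∩ Z̃(N)`.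
-/

/-- The almost center `Z̃(M)` of a subgroup `M` of `G`: the set of elements `m ∈ M` whose
centralizer in `M` has finite index in `M`. -/
def almostCenter {G : Type*} [Group G] (M : Subgroup G) : Set G :=
  {m : G | m ∈ M ∧ (Subgroup.centralizer {m}).relIndex M ≠ 0}

namespace Subgroup

variable {G : Type*} [Group G]

theorem relIndex_inf_ne_zero_iff {M N : Subgroup G} (hNM : N.relIndex M ≠ 0) (C : Subgroup G) :
    C.relIndex (M ⊓ N) ≠ 0 ↔ C.relIndex M ≠ 0 := by
  refine ⟨fun hC => relIndex_ne_zero_trans hC ?_, fun hC h0 => hC ?_⟩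
  · rwa [inf_relIndex_left]
  · exact relIndex_eq_zero_of_le_right inf_le_left h0

end Subgroup

section AlmostCenter

variable {G : Type*} [Group G]

theorem almostCenter_subset (M : Subgroup G) : almostCenter M ⊆ M :=
  fun _ hm => hm.1

theorem almostCenter_inf_eq_inter {M N : Subgroup G} (hNM : N.relIndex M ≠ 0) :
    almostCenter (M ⊓ N) = almostCenter M ∩ N := by
  ext m
  simp only [almostCenter, Set.mem_inter_iff, Set.mem_ofPred, Subgroup.mem_inf, SetLike.mem_coe,
    Subgroup.relIndex_inf_ne_zero_iff hNM]
  tauto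

end AlmostCenter

/-- If `M` and `N` are commensurable subgroups of a group `G`, then
`Z̃(M ⊓ N) = Z̃(M) ∩ Z̃(N) = Z̃(M) ∩ N = Z̃(N) ∩ M`. -/
theorem stmt4 {G : Type*} [Group G] (M N : Subgroup G) (h : Subgroup.Commensurable M N) :
    almostCenter (M ⊓ N) = almostCenter M ∩ almostCenter N ∧
    almostCenter (M ⊓ N) = almostCenter M ∩ (N : Set G) ∧
    almostCenter (M ⊓ N) = almostCenter N ∩ (M : Set G) := by
  have hM : almostCenter (M ⊓ N) = almostCenter M ∩ N := almostCenter_inf_eq_inter h.2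
  have hN : almostCenter (M ⊓ N) = almostCenter N ∩ M := by
    rw [inf_comm]
    exact almostCenter_inf_eq_inter h.1
  refine ⟨Set.Subset.antisymm ?_ ?_, hM, hN⟩
  · intro x hx
    exact ⟨(hM ▸ hx).1, (hN ▸ hx).1⟩
  · rintro x ⟨hxM, hxN⟩
    exact hM ▸ ⟨hxM, almostCenter_subset N hxN⟩
end

section
/- Let G be a group and let d, m ∈ ℕ with d ≥ 1 and 2^m > d, and set n = (d+1)·m. Suppose G contains nontrivial subgroups D_0, …, D_{n−1}, each with trivial center, which pairwise commute elementwise. Then there exist elements h_0, …, h_d ∈ G such that for every i < d, the index [C_G(h_0, …, h_i) : C_G(h_0, …, h_{i+1})] is greater than d. In particular, G fails the M̃_c-condition with parameter d. -/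
/-!
Split the subgroups into `d + 1` blocks of `m`. In each `D j` pick non-commuting `a j, b j`, and
let `h i` be the product of the `a j` over block `i`. Pairwise commuting centerless subgroups
generate their internal direct product, so commutation of products can be tested factor by
factor. Hence the `2 ^ m` partial products of the `b j` over block `i + 1` all centralize
`h 0, …, h i`, while no quotient of two distinct ones centralizes `h (i + 1)`: they lie in
distinct cosets of `C_G(h 0, …, h (i+1))` in `C_G(h 0, …, h i)`.
-/

/-- The simultaneous centralizer `C_G(h 0, …, h k) = ⋂_{j ≤ k} C_G(h j)` of the first
`k + 1` entries of a tuple `h : Fin n → G`. -/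
def simCent {G : Type*} [Group G] {n : ℕ} (h : Fin n → G) (k : ℕ) : Subgroup G :=
  ⨅ j : Fin n, ⨅ _ : (j : ℕ) ≤ k, Subgroup.centralizer {h j}

theorem mem_simCent_iff {G : Type*} [Group G] {n : ℕ} {h : Fin n → G} {k : ℕ} {x : G} :
    x ∈ simCent h k ↔ ∀ j : Fin n, (j : ℕ) ≤ k → Commute (h j) x := by
  simp only [simCent, Subgroup.mem_iInf, Subgroup.mem_centralizer_singleton_iff, commute_iff_eq,
    eq_comm]

theorem exists_not_commute_of_center_eq_bot {G : Type*} [Group G] [Nontrivial G]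
    (h : Subgroup.center G = ⊥) : ∃ a b : G, ¬Commute a b := by
  obtain ⟨x, hx⟩ := exists_ne (1 : G)
  have hxc : x ∉ Subgroup.center G := by rwa [h, Subgroup.mem_bot]
  rw [Subgroup.mem_center_iff] at hxc
  push Not at hxc
  obtain ⟨g, hg⟩ := hxc
  exact ⟨g, x, hg⟩

theorem iff_of_commute_ite_inv_mul_ite {G : Type*} [Group G] {a b : G} (hab : ¬Commute a b)
    {P Q : Prop} [Decidable P] [Decidable Q]
    (h : Commute a ((if P then b else 1)⁻¹ * if Q then b else 1)) : P ↔ Q := by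
  split_ifs at h with hP hQ hQ <;> simp_all [Commute.inv_right_iff]

namespace Subgroup

variable {G : Type*} [Group G] {ι : Type*}

theorem iSupIndep_of_pairwise_commute_of_center_eq_bot {H : ι → Subgroup G}
    (hcomm : Pairwise fun i j => ∀ x y : G, x ∈ H i → y ∈ H j → Commute x y)
    (hcenter : ∀ i, center (H i) = ⊥) : iSupIndep H := by
  intro i
  rw [disjoint_def]
  intro x hx hx'
  have hle : (⨆ (j) (_ : j ≠ i), H j) ≤ centralizer (H i) :=
    iSup₂_le fun j hji y hy => mem_centralizer_iff.mpr fun z hz => (hcomm hji y z hy hz).eq.symm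
  have hcen : (⟨x, hx⟩ : H i) ∈ center (H i) :=
    mem_center_iff.mpr fun g => Subtype.ext (mem_centralizer_iff.mp (hle hx') g g.2)
  rw [hcenter i, mem_bot] at hcen
  exact congrArg Subtype.val hcen

theorem commute_noncommPiCoprod_iff [Fintype ι] {H : ι → Subgroup G}
    (hcomm : Pairwise fun i j => ∀ x y : G, x ∈ H i → y ∈ H j → Commute x y)
    (hind : iSupIndep H) {f g : ∀ i, H i} :
    Commute (noncommPiCoprod hcomm f) (noncommPiCoprod hcomm g) ↔ ∀ i, Commute (f i) (g i) := by
  rw [commute_map_iff (injective_noncommPiCoprod_of_iSupIndep hind), Pi.commute_iff]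

theorem relIndex_eq_zero_or_card_le [Finite ι] {H K : Subgroup G} (c : ι → G)
    (hmem : ∀ i, c i ∈ K) (hsep : ∀ i j, (c i)⁻¹ * c j ∈ H → i = j) :
    H.relIndex K = 0 ∨ Nat.card ι ≤ H.relIndex K := by
  rw [or_iff_not_imp_left]
  intro h0
  have : Finite (K ⧸ H.subgroupOf K) := (Nat.card_ne_zero.mp h0).2
  refine Nat.card_le_card_of_injective (fun i => (⟨c i, hmem i⟩ : K)) fun i j hij => hsep i j ?_
  rwa [QuotientGroup.eq, mem_subgroupOf] at hij

end Subgroup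

open Subgroup in
theorem exists_simCent_relIndex_eq_zero_or_two_pow_le {G : Type*} [Group G] {κ : Type*}
    [Fintype κ] [DecidableEq κ] {d : ℕ} (E : Fin (d + 1) × κ → Subgroup G)
    (hcomm : Pairwise fun p q => ∀ x y : G, x ∈ E p → y ∈ E q → Commute x y)
    (hnontriv : ∀ p, E p ≠ ⊥) (hcenter : ∀ p, center (E p) = ⊥) :
    ∃ h : Fin (d + 1) → G, ∀ i : Fin d,
      (simCent h (i + 1)).relIndex (simCent h i) = 0 ∨
      2 ^ Fintype.card κ ≤ (simCent h (i + 1)).relIndex (simCent h i) := by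
  have hind := iSupIndep_of_pairwise_commute_of_center_eq_bot hcomm hcenter
  have hpair : ∀ p, ∃ a b : E p, ¬Commute a b := fun p =>
    have := (nontrivial_iff_ne_bot _).mpr (hnontriv p)
    exists_not_commute_of_center_eq_bot (hcenter p)
  choose a b hab using hpair
  let ψ := noncommPiCoprod hcomm
  let h : Fin (d + 1) → G := fun j => ψ fun p => if p.1 = j then a p else 1
  refine ⟨h, fun i => ?_⟩
  let β : Fin (d + 1) := ⟨i + 1, by omega⟩
  have := relIndex_eq_zero_or_card_le (H := simCent h (i + 1)) (K := simCent h i)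
    (fun S : Finset κ => ψ fun p => if p.1 = β ∧ p.2 ∈ S then b p else 1) ?_ ?_
  · simpa [Nat.card_eq_fintype_card, Fintype.card_finset] using this
  · intro S
    rw [mem_simCent_iff]
    intro j hj
    rw [commute_noncommPiCoprod_iff hcomm hind]
    intro p
    have : ¬(p.1 = j ∧ p.1 = β) := fun ⟨h1, h2⟩ => by
      have : (j : ℕ) = i + 1 := congrArg Fin.val (h1.symm.trans h2)
      omega
    split_ifs <;> simp_all
  · intro S S' hSS'
    have hβ : Commute (h β) _ := mem_simCent_iff.mp hSS' β le_rfl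
    rw [← map_inv, ← map_mul, commute_noncommPiCoprod_iff hcomm hind] at hβ
    ext t
    have := hβ (β, t)
    simp only [Pi.mul_apply, Pi.inv_apply, true_and, if_true] at this
    exact iff_of_commute_ite_inv_mul_ite (hab _) this

theorem stmt6_general {G : Type*} [Group G] (d m : ℕ) (hm : d < 2 ^ m)
    (D : Fin ((d + 1) * m) → Subgroup G)
    (hnontriv : ∀ i, D i ≠ ⊥)
    (hcenter : ∀ i, Subgroup.center (D i) = ⊥)
    (hcomm : ∀ i j, i ≠ j → ∀ x ∈ D i, ∀ y ∈ D j, Commute x y) :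
    (∃ h : Fin (d + 1) → G, ∀ i : Fin d,
      (simCent h ((i : ℕ) + 1)).relIndex (simCent h (i : ℕ)) = 0 ∨
      d < (simCent h ((i : ℕ) + 1)).relIndex (simCent h (i : ℕ))) ∧
    ¬ (∀ g : Fin (d + 1) → G, ∃ i : Fin d,
      (simCent g ((i : ℕ) + 1)).relIndex (simCent g (i : ℕ)) ≠ 0 ∧
      (simCent g ((i : ℕ) + 1)).relIndex (simCent g (i : ℕ)) ≤ d) := by
  let e := (finProdFinEquiv : Fin (d + 1) × Fin m ≃ Fin ((d + 1) * m))
  obtain ⟨h, hh⟩ := exists_simCent_relIndex_eq_zero_or_two_pow_le (fun p => D (e p))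
    (fun p q hpq x y hx hy => hcomm _ _ (e.injective.ne hpq) x hx y hy)
    (fun p => hnontriv _) (fun p => hcenter _)
  rw [Fintype.card_fin] at hh
  have hbig : ∀ i : Fin d, (simCent h (i + 1)).relIndex (simCent h i) = 0 ∨
      d < (simCent h (i + 1)).relIndex (simCent h i) := fun i =>
    (hh i).imp_right hm.trans_le
  refine ⟨⟨h, hbig⟩, fun hall => ?_⟩
  obtain ⟨i, hne, hle⟩ := hall h
  exact (hbig i).elim hne (hle.not_gt ·)

/-- Let `G` be a group, `d ≥ 1`, `2 ^ m > d`, and `n = (d + 1) * m`.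
If `G` contains nontrivial subgroups `D 0, …, D (n - 1)`, each with trivial center, which
pairwise commute elementwise, then there exist `h 0, …, h d ∈ G` such that for every
`i < d` the index `[C_G(h 0, …, h i) : C_G(h 0, …, h (i+1))]` is greater than `d` (i.e.
infinite or `> d`).  In particular `G` fails the `M̃_c`-condition with parameter `d`. -/
theorem stmt6 {G : Type*} [Group G] (d m : ℕ) (hd : 1 ≤ d) (hm : d < 2 ^ m)
    (D : Fin ((d + 1) * m) → Subgroup G)
    (hnontriv : ∀ i, D i ≠ ⊥)
    (hcenter : ∀ i, Subgroup.center (D i) = ⊥)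
    (hcomm : ∀ i j, i ≠ j → ∀ x ∈ D i, ∀ y ∈ D j, Commute x y) :
    (∃ h : Fin (d + 1) → G, ∀ i : Fin d,
      (simCent h ((i : ℕ) + 1)).relIndex (simCent h (i : ℕ)) = 0 ∨
      d < (simCent h ((i : ℕ) + 1)).relIndex (simCent h (i : ℕ))) ∧
    ¬ (∀ g : Fin (d + 1) → G, ∃ i : Fin d,
      (simCent g ((i : ℕ) + 1)).relIndex (simCent g (i : ℕ)) ≠ 0 ∧
      (simCent g ((i : ℕ) + 1)).relIndex (simCent g (i : ℕ)) ≤ d) :=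
  stmt6_general d m hm D hnontriv hcenter hcomm
end

section
/- Let D_0, …, D_{m−1} be subgroups of a group G, each with trivial center, which pairwise commute elementwise. Then the family is independent: for each i, the intersection of D_i with the subgroup generated by ⋃_{j ≠ i} D_j is trivial; consequently every element of the subgroup P generated by ⋃_j D_j can be written uniquely as a product d_0 d_1 ⋯ d_{m−1} with d_j ∈ D_j. -/
lemma noncommProd_univ_fin_eq_ofFn {G : Type*} [Monoid G] {m : ℕ} (f : Fin m → G) (comm) :
    Finset.univ.noncommProd f comm = (List.ofFn f).prod := by
  rw [List.ofFn_eq_map, Finset.noncommProd]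
  exact Multiset.noncommProd_coe _ _

/-- Let `D 0, …, D (m-1)` be subgroups of a group `G`, each with trivial
center, which pairwise commute elementwise.  Then the family is independent: for each `i`,
the intersection of `D i` with the subgroup generated by `⋃_{j ≠ i} D j` is trivial;
consequently every element of the subgroup `P = ⟨⋃ j, D j⟩` can be written uniquely as an
ordered product `d 0 * d 1 * ⋯ * d (m-1)` with `d j ∈ D j`. -/
theorem stmt7 {G : Type*} [Group G] (m : ℕ) (D : Fin m → Subgroup G)
    (hcenter : ∀ i, Subgroup.center (D i) = ⊥)
    (hcomm : ∀ i j, i ≠ j → ∀ x ∈ D i, ∀ y ∈ D j, Commute x y) :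
    (∀ i, D i ⊓ (⨆ j, ⨆ _ : j ≠ i, D j) = ⊥) ∧
    ∀ g ∈ ⨆ j, D j, ∃! d : Fin m → G,
      (∀ j, d j ∈ D j) ∧ (List.ofFn d).prod = g := by
  have hind : ∀ i, D i ⊓ (⨆ j, ⨆ _ : j ≠ i, D j) = ⊥ := by
    intro i
    rw [eq_bot_iff]
    rintro x ⟨hxi, hxs⟩
    -- every element of the big sup commutes with every element of D i
    have hc : ∀ z ∈ (⨆ j, ⨆ _ : j ≠ i, D j), ∀ y ∈ D i, Commute z y := by
      intro z hz
      refine Subgroup.iSup_induction (C := fun z => ∀ y ∈ D i, Commute z y) _ hz ?_ ?_ ?_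
      · intro j w hw
        rcases eq_or_ne j i with rfl | hji
        · rw [iSup_neg (by simp)] at hw
          simp only [Subgroup.mem_bot] at hw
          subst hw
          intro y _; exact Commute.one_left y
        · rw [iSup_pos hji] at hw
          intro y hy
          exact hcomm j i hji w hw y hy
      · intro y _; exact Commute.one_left y
      · intro a b ha hb y hy
        exact (ha y hy).mul_left (hb y hy)
    have hcen : (⟨x, hxi⟩ : D i) ∈ Subgroup.center (D i) := by
      rw [Subgroup.mem_center_iff]
      intro z
      exact Subtype.ext ((hc x hxs z.1 z.2).symm)
    rw [hcenter i, Subgroup.mem_bot] at hcen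
    have : x = 1 := congrArg Subtype.val hcen
    simp [this]
  refine ⟨hind, ?_⟩
  have hcomm' : Pairwise fun i j : Fin m => ∀ x y : G, x ∈ D i → y ∈ D j → Commute x y :=
    fun i j h x y hx hy => hcomm i j h x hx y hy
  have hsupind : iSupIndep D := by
    rw [iSupIndep_def]
    intro i
    exact disjoint_iff.mpr (hind i)
  have hinj := Subgroup.injective_noncommPiCoprod_of_iSupIndep (hcomm := hcomm') hsupind
  have hkey : ∀ f : (i : Fin m) → D i,
      Subgroup.noncommPiCoprod hcomm' f = (List.ofFn fun j => (f j : G)).prod := by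
    intro f
    rw [Subgroup.noncommPiCoprod_apply]
    exact noncommProd_univ_fin_eq_ofFn _ _
  intro g hg
  rw [← Subgroup.noncommPiCoprod_range (hcomm := hcomm')] at hg
  obtain ⟨f, rfl⟩ := hg
  refine ⟨fun j => (f j : G), ⟨fun j => (f j).2, (hkey f).symm⟩, ?_⟩
  rintro d ⟨hd, hprod⟩
  have : Subgroup.noncommPiCoprod hcomm' (fun j => ⟨d j, hd j⟩) =
      Subgroup.noncommPiCoprod hcomm' f := by
    rw [hkey, hkey]
    exact hprod.trans (hkey f)
  have heq := hinj this
  funext j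
  exact congrArg Subtype.val (congrFun heq j)
end

section
/- Let D_0, …, D_{m−1} be subgroups of a group G, each with trivial center, which pairwise commute elementwise, and let P be the subgroup generated by ⋃_j D_j. For elements g_j ∈ D_j (j < m), the centralizer in P of the product g_0 g_1 ⋯ g_{m−1} equals the product C_{D_0}(g_0) · C_{D_1}(g_1) ⋯ C_{D_{m−1}}(g_{m−1}); consequently [P : C_P(g_0 ⋯ g_{m−1})] = ∏_{j < m} [D_j : C_{D_j}(g_j)]. -/
/-!
Since the `D j` commute pairwise, multiplication gives a homomorphism `ψ : ∏ j, D j → G` onto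
`P = ⨆ j, D j`. An element of `D i` that also lies in the join of the other `D j` centralizes
`D i`, hence is central in `D i` and trivial; so the `D j` are independent and `ψ` is an
isomorphism onto `P`. Centralizers in a direct product are computed coordinatewise, so `ψ`
carries `∏ j, C_{D j}(g j)` onto `C_P(g 0 ⋯ g (m-1))`, and the index of a product of subgroups
is the product of the indices.
-/

open Set Function

namespace Subgroup

variable {G : Type*} [Group G]

theorem iSupIndep_of_commute_of_center_eq_bot {ι : Type*} {D : ι → Subgroup G}
    (hcomm : Pairwise fun i j => ∀ x y : G, x ∈ D i → y ∈ D j → Commute x y)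
    (hcenter : ∀ i, center (D i) = ⊥) : iSupIndep D := by
  intro i
  rw [disjoint_iff_inf_le]
  rintro x ⟨hxi, hx⟩
  have hle : (⨆ j ≠ i, D j) ≤ centralizer (D i : Set G) :=
    iSup₂_le fun j hj y hy => mem_centralizer_iff.mpr fun z hz => (hcomm hj y z hy hz).eq.symm
  have hxc : (⟨x, hxi⟩ : D i) ∈ center (D i) :=
    mem_center_iff.mpr fun y => Subtype.ext (mem_centralizer_iff.mp (hle hx) y y.2)
  rw [hcenter i, mem_bot] at hxc
  exact mem_bot.mpr (congrArg Subtype.val hxc)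

theorem comap_centralizer_singleton_of_injective {G' : Type*} [Group G'] {f : G →* G'}
    (hf : Injective f) (x : G) : (centralizer {f x}).comap f = centralizer {x} := by
  ext y
  simp only [mem_comap, mem_centralizer_singleton_iff, ← map_mul, hf.eq_iff]

theorem centralizer_singleton_pi {ι : Type*} {f : ι → Type*} [∀ i, Group (f i)]
    (x : ∀ i, f i) : centralizer {x} = pi univ fun i => centralizer {x i} := by
  ext y
  simp only [mem_centralizer_singleton_iff, mem_pi, mem_univ, true_implies, funext_iff,
    Pi.mul_apply]

theorem index_pi' {ι : Type*} [Fintype ι] {f : ι → Type*} [∀ i, Group (f i)]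
    (H : ∀ i, Subgroup (f i)) : (pi univ H).index = ∏ i, (H i).index := by
  simp_rw [index, ← Nat.card_pi]
  refine Nat.card_congr
    ((Quotient.congrRight fun x y => ?_).trans (Setoid.piQuotientEquiv _).symm)
  rw [QuotientGroup.leftRel_pi]

section CommutingSubgroups

variable {ι : Type*} [Fintype ι] {D : ι → Subgroup G}
  {hcomm : Pairwise fun i j => ∀ x y : G, x ∈ D i → y ∈ D j → Commute x y}

theorem comap_noncommPiCoprod_centralizer (hinj : Injective (noncommPiCoprod hcomm))
    (g : ∀ i, D i) :
    (centralizer {noncommPiCoprod hcomm g}).comap (noncommPiCoprod hcomm) =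
      pi univ fun i => (centralizer {(g i : G)}).subgroupOf (D i) := by
  rw [comap_centralizer_singleton_of_injective hinj, centralizer_singleton_pi]
  congr 1
  funext i
  exact (comap_centralizer_singleton_of_injective (D i).subtype_injective (g i)).symm

end CommutingSubgroups

section Fin

variable {m : ℕ} {D : Fin m → Subgroup G}
  {hcomm : Pairwise fun i j => ∀ x y : G, x ∈ D i → y ∈ D j → Commute x y}

theorem noncommPiCoprod_apply_eq_prod_ofFn (d : ∀ i, D i) :
    noncommPiCoprod hcomm d = (List.ofFn fun i => (d i : G)).prod := by
  rw [noncommPiCoprod_apply, List.ofFn_eq_map]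
  exact Multiset.noncommProd_coe _ _

theorem coe_map_noncommPiCoprod_pi_subgroupOf (H : Fin m → Subgroup G) :
    (((pi univ fun j => (H j).subgroupOf (D j)).map (noncommPiCoprod hcomm) : Subgroup G) :
        Set G) =
      {x | ∃ c : Fin m → G, (∀ j, c j ∈ H j ⊓ D j) ∧ (List.ofFn c).prod = x} := by
  ext x
  constructor
  · rintro ⟨d, hd, rfl⟩
    exact ⟨fun j => d j, fun j => ⟨hd j trivial, (d j).2⟩,
      (noncommPiCoprod_apply_eq_prod_ofFn d).symm⟩
  · rintro ⟨c, hc, rfl⟩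
    exact ⟨fun j => ⟨c j, (hc j).2⟩, fun j _ => (hc j).1, noncommPiCoprod_apply_eq_prod_ofFn _⟩

end Fin

end Subgroup

open Subgroup

/-- Let `D 0, …, D (m-1)` be subgroups of a group `G`, each with trivial
center, which pairwise commute elementwise, and let `P = ⟨⋃ j, D j⟩`.  For elements
`g j ∈ D j`, the centralizer in `P` of the product `g 0 * ⋯ * g (m-1)` equals the
(elementwise) product `C_{D 0}(g 0) ⋯ C_{D (m-1)}(g (m-1))`; consequently
`[P : C_P(g 0 ⋯ g (m-1))] = ∏_{j < m} [D j : C_{D j}(g j)]`. -/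
theorem stmt8 {G : Type*} [Group G] (m : ℕ) (D : Fin m → Subgroup G)
    (hcenter : ∀ i, Subgroup.center (D i) = ⊥)
    (hcomm : ∀ i j, i ≠ j → ∀ x ∈ D i, ∀ y ∈ D j, Commute x y)
    (g : Fin m → G) (hg : ∀ j, g j ∈ D j) :
    ((Subgroup.centralizer {(List.ofFn g).prod} ⊓ (⨆ j, D j) : Subgroup G) : Set G) =
      {x : G | ∃ c : Fin m → G,
        (∀ j, c j ∈ Subgroup.centralizer {g j} ⊓ D j) ∧ (List.ofFn c).prod = x} ∧
    (Subgroup.centralizer {(List.ofFn g).prod}).relIndex (⨆ j, D j) =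
      ∏ j : Fin m, (Subgroup.centralizer {g j}).relIndex (D j) := by
  have hcomm' : Pairwise fun i j => ∀ x y : G, x ∈ D i → y ∈ D j → Commute x y :=
    fun i j hij x y hx hy => hcomm i j hij x hx y hy
  set ψ := noncommPiCoprod hcomm'
  have hinj : Injective ψ :=
    injective_noncommPiCoprod_of_iSupIndep (iSupIndep_of_commute_of_center_eq_bot hcomm' hcenter)
  have hprod : (List.ofFn g).prod = ψ fun j => ⟨g j, hg j⟩ := by
    rw [noncommPiCoprod_apply_eq_prod_ofFn]
  have hcomap : (Subgroup.centralizer {(List.ofFn g).prod}).comap ψ =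
      Subgroup.pi univ fun j => (Subgroup.centralizer {g j}).subgroupOf (D j) := by
    rw [hprod]
    exact comap_noncommPiCoprod_centralizer hinj _
  rw [← noncommPiCoprod_range (hcomm := hcomm'), inf_comm, ← map_comap_eq, hcomap,
    coe_map_noncommPiCoprod_pi_subgroupOf, ← index_comap, hcomap, index_pi']
  exact ⟨rfl, rfl⟩
end

section
/- Let G be a group, D a subgroup of G, t_0, …, t_k ∈ G, and set E = ⋂_{i ≤ k} D^{t_i}. Suppose d ∈ ℕ is such that [E : E ∩ D^{t}] ≤ d for every t ∈ G. Then for all h_1, h_2 ∈ G one has [E^{h_1} : E^{h_1} ∩ E^{h_2}] ≤ d^{k+1}; in particular the conjugates {E^{t} : t ∈ G} form a uniformly commensurable family of subgroups. -/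
/-!
Conjugating `E = ⨅ i, D ^ (t i)` by `s` gives `⨅ i, D ^ (t i * s)`, an intersection of `k + 1`
conjugates of `D`, each of index at most `d` relative to `E`; hence `[E : E ∩ E ^ s] ≤ d ^ (k + 1)`.
Conjugating by `h₁⁻¹` preserves relative indices and reduces `[E ^ h₁ : E ^ h₁ ∩ E ^ h₂]` to this
case with `s = h₂ * h₁⁻¹`.
-/

/-- The conjugate `D ^ t = t⁻¹ D t` of a subgroup `D` of `G` by an element `t : G`. -/
def conjSub {G : Type*} [Group G] (D : Subgroup G) (t : G) : Subgroup G :=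
  D.map (MulAut.conj t⁻¹).toMonoidHom

namespace Subgroup

variable {G : Type*} [Group G]

theorem relIndex_iInf_le_pow {ι : Type*} [Fintype ι] {L : Subgroup G} (f : ι → Subgroup G)
    {d : ℕ} (hf : ∀ i, (f i).relIndex L ≤ d) :
    (⨅ i, f i).relIndex L ≤ d ^ Fintype.card ι :=
  (relIndex_iInf_le f).trans (Finset.prod_le_pow_card _ _ _ fun i _ => hf i)

theorem conjSub_eq_comap (D : Subgroup G) (t : G) :
    conjSub D t = D.comap (MulAut.conj t).toMonoidHom := by
  ext x
  simp only [conjSub, mem_map, mem_comap]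
  constructor
  · rintro ⟨y, hy, rfl⟩
    simpa [mul_assoc] using hy
  · exact fun hx => ⟨t * x * t⁻¹, hx, by simp [mul_assoc]⟩

theorem conjSub_conjSub (D : Subgroup G) (a b : G) :
    conjSub (conjSub D a) b = conjSub D (a * b) := by
  simp only [conjSub_eq_comap, comap_comap]
  congr 1
  ext x
  simp [mul_assoc]

@[simp]
theorem conjSub_one (D : Subgroup G) : conjSub D 1 = D := by
  ext x
  simp [conjSub_eq_comap]

theorem conjSub_iInf {ι : Type*} (f : ι → Subgroup G) (g : G) :
    conjSub (⨅ i, f i) g = ⨅ i, conjSub (f i) g := by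
  simp only [conjSub_eq_comap]
  exact comap_iInf _ f

@[simp]
theorem relIndex_conjSub (H K : Subgroup G) (g : G) :
    (conjSub H g).relIndex (conjSub K g) = H.relIndex K := by
  rw [conjSub_eq_comap, conjSub_eq_comap, relIndex_comap,
    map_comap_eq_self_of_surjective (MulEquiv.surjective _)]

theorem relIndex_conjSub_conjSub (E : Subgroup G) (h₁ h₂ : G) :
    (conjSub E h₂).relIndex (conjSub E h₁) = (conjSub E (h₂ * h₁⁻¹)).relIndex E := by
  rw [← relIndex_conjSub (conjSub E h₂) (conjSub E h₁) h₁⁻¹, conjSub_conjSub, conjSub_conjSub,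
    mul_inv_cancel, conjSub_one]

end Subgroup

open Subgroup

/-- Let `D` be a subgroup of `G`, `t 0, …, t k ∈ G`, and set
`E = ⨅ i, D ^ (t i)`.  Suppose `d ∈ ℕ` is such that `[E : E ⊓ D ^ t] ≤ d` (in particular
finite) for every `t ∈ G`.  Then for all `h₁, h₂ ∈ G` the index `[E ^ h₁ : E ^ h₁ ⊓ E ^ h₂]`
is finite and at most `d ^ (k + 1)`; in particular the conjugates `{E ^ t : t ∈ G}` form a
uniformly commensurable family of subgroups. -/
theorem stmt10 {G : Type*} [Group G] (D : Subgroup G) (k : ℕ) (t : Fin (k + 1) → G)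
    (E : Subgroup G) (hE : E = ⨅ i, conjSub D (t i)) (d : ℕ)
    (hd : ∀ s : G, (conjSub D s).relIndex E ≠ 0 ∧ (conjSub D s).relIndex E ≤ d) :
    (∀ h₁ h₂ : G, (conjSub E h₂).relIndex (conjSub E h₁) ≠ 0 ∧
      (conjSub E h₂).relIndex (conjSub E h₁) ≤ d ^ (k + 1)) ∧
    ∃ N : ℕ, ∀ s s' : G, (conjSub E s').relIndex (conjSub E s) ≠ 0 ∧
      (conjSub E s').relIndex (conjSub E s) ≤ N := by
  have hEs (s : G) : conjSub E s = ⨅ i, conjSub D (t i * s) := by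
    simp only [hE, conjSub_iInf, conjSub_conjSub]
  have bound (h₁ h₂ : G) : (conjSub E h₂).relIndex (conjSub E h₁) ≠ 0 ∧
      (conjSub E h₂).relIndex (conjSub E h₁) ≤ d ^ (k + 1) := by
    rw [relIndex_conjSub_conjSub, hEs]
    refine ⟨relIndex_iInf_ne_zero fun i => (hd _).1, ?_⟩
    simpa using relIndex_iInf_le_pow _ fun i => (hd (t i * (h₂ * h₁⁻¹))).2
  exact ⟨bound, d ^ (k + 1), bound⟩
end

section
/- Let G be a group acting faithfully and primitively on a set X (the action is transitive and admits no nontrivial blocks), and let A be a nontrivial commutative normal subgroup of G. Then: (a) A acts regularly on X, i.e., for every x ∈ X the map a ↦ a • x is a bijection from A onto X; (b) for every x ∈ X, A ∩ Stab_G(x) = {1} and A · Stab_G(x) = G; (c) for every integer n ≥ 1, the subgroup A^n = {a^n : a ∈ A} equals A or is trivial, and consequently A is either divisible and torsion-free or an elementary abelian p-group for some prime p. -/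
open scoped Pointwise

/-- Let `G` act faithfully and primitively on `X` (transitively, with no
nontrivial blocks), and let `A` be a nontrivial commutative normal subgroup of `G`.  Then:
(a) `A` acts regularly on `X`: for every `x` the map `a ↦ a • x` is a bijection `A → X`;
(b) for every `x`, `A ⊓ Stab_G(x) = ⊥` and `A * Stab_G(x) = G`;
(c) for every `n ≥ 1` the subgroup `Aⁿ = {aⁿ : a ∈ A}` equals `A` or is trivial, and
consequently `A` is either divisible and torsion-free or an elementary abelian `p`-group
for some prime `p`. -/
theorem stmt15 {G X : Type*} [Group G] [MulAction G X]
    (hfaithful : ∀ g : G, (∀ x : X, g • x = x) → g = 1)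
    (htrans : ∀ x y : X, ∃ g : G, g • x = y)
    (hprim : ∀ B : Set X, MulAction.IsBlock G B → MulAction.IsTrivialBlock B)
    (A : Subgroup G) (hAne : A ≠ ⊥)
    (hAcomm : ∀ a ∈ A, ∀ b ∈ A, Commute a b) (hA : A.Normal) :
    (∀ x : X, Function.Bijective (fun a : A => (a : G) • x)) ∧
    (∀ x : X, A ⊓ MulAction.stabilizer G x = ⊥ ∧
      (A : Set G) * (MulAction.stabilizer G x : Set G) = Set.univ) ∧
    (∀ n : ℕ, 1 ≤ n →
      {g : G | ∃ a ∈ A, a ^ n = g} = (A : Set G) ∨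
      {g : G | ∃ a ∈ A, a ^ n = g} = {1}) ∧
    (((∀ n : ℕ, 1 ≤ n → ∀ a ∈ A, ∃ b ∈ A, b ^ n = a) ∧
        (∀ a ∈ A, ∀ n : ℕ, 1 ≤ n → a ^ n = 1 → a = 1)) ∨
      ∃ p : ℕ, p.Prime ∧ ∀ a ∈ A, a ^ p = 1) := by
  classical
  -- a nontrivial element of A
  obtain ⟨a0, ha0A, ha0⟩ : ∃ a ∈ A, a ≠ 1 := by
    by_contra h
    push_neg at h
    exact hAne (by
      ext g
      simp only [Subgroup.mem_bot]
      exact ⟨fun hg => h g hg, fun hg => hg ▸ A.one_mem⟩)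
  obtain ⟨x0, hx0⟩ : ∃ x : X, a0 • x ≠ x := by
    by_contra h
    push_neg at h
    exact ha0 (hfaithful a0 h)
  -- Key: a normal subgroup that moves some point is transitive.
  have key : ∀ (N : Subgroup G), N.Normal → ∀ n ∈ N, ∀ x : X, n • x ≠ x →
      ∀ y z : X, ∃ m ∈ N, m • y = z := by
    intro N hN n hn x hnx y z
    haveI := hN
    have hb : MulAction.IsBlock G (MulAction.orbit N x) :=
      MulAction.IsBlock.orbit_of_normal x
    have htriv := hprim _ hb
    have huniv : MulAction.orbit N x = Set.univ := by
      rcases htriv with hs | hu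
      · exfalso
        exact hnx (hs (MulAction.mem_orbit x ⟨n, hn⟩) (MulAction.mem_orbit_self x))
      · exact hu
    have horb : ∀ w : X, ∃ m : N, (m : G) • x = w := by
      intro w
      have : w ∈ MulAction.orbit N x := huniv ▸ Set.mem_univ w
      obtain ⟨m, hm⟩ := this
      exact ⟨m, hm⟩
    obtain ⟨m1, hm1⟩ := horb y
    obtain ⟨m2, hm2⟩ := horb z
    refine ⟨(m2 : G) * (m1 : G)⁻¹, N.mul_mem m2.2 (N.inv_mem m1.2), ?_⟩
    rw [← hm1, ← hm2, mul_smul, inv_smul_smul]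
  -- A is transitive
  have htransA : ∀ y z : X, ∃ a ∈ A, a • y = z := key A hA a0 ha0A x0 hx0
  -- an element of A fixing one point is 1
  have hfix : ∀ a ∈ A, ∀ x : X, a • x = x → a = 1 := by
    intro a ha x hax
    refine hfaithful a (fun y => ?_)
    obtain ⟨b, hb, hby⟩ := htransA x y
    rw [← hby, smul_smul, (hAcomm a ha b hb).eq, mul_smul, hax]
  -- a similar statement for a transitive subgroup contained in A: it equals A
  have sub_eq : ∀ (N : Subgroup G), (∀ g ∈ N, g ∈ A) →
      (∀ y z : X, ∃ m ∈ N, m • y = z) → ∀ a ∈ A, a ∈ N := by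
    intro N hNA hNt a ha
    obtain ⟨m, hm, hmx⟩ := hNt x0 (a • x0)
    have : a⁻¹ * m = 1 := by
      refine hfix _ (A.mul_mem (A.inv_mem ha) (hNA m hm)) x0 ?_
      rw [mul_smul, hmx, inv_smul_smul]
    have ham : a = m := by
      have := congrArg (a * ·) this
      simpa [mul_assoc] using this.symm
    exact ham ▸ hm
  -- part (a)
  have parta : ∀ x : X, Function.Bijective (fun a : A => (a : G) • x) := by
    intro x
    constructor
    · rintro ⟨a, ha⟩ ⟨b, hb⟩ hab
      simp only at hab
      have : (b⁻¹ * a) • x = x := by rw [mul_smul, hab, inv_smul_smul]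
      have h1 : b⁻¹ * a = 1 := hfix _ (A.mul_mem (A.inv_mem hb) ha) x this
      have : a = b := by
        have := congrArg (b * ·) h1
        simpa [mul_assoc] using this
      exact Subtype.ext this
    · intro y
      obtain ⟨a, ha, hay⟩ := htransA x y
      exact ⟨⟨a, ha⟩, hay⟩
  -- part (b)
  have partb : ∀ x : X, A ⊓ MulAction.stabilizer G x = ⊥ ∧
      (A : Set G) * (MulAction.stabilizer G x : Set G) = Set.univ := by
    intro x
    constructor
    · refine le_antisymm ?_ bot_le
      intro g hg
      rw [Subgroup.mem_inf] at hg
      rw [Subgroup.mem_bot]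
      exact hfix g hg.1 x hg.2
    · refine Set.eq_univ_of_forall (fun g => ?_)
      obtain ⟨a, ha, hax⟩ := htransA x (g • x)
      refine Set.mem_mul.2 ⟨a, ha, a⁻¹ * g, ?_, by group⟩
      show (a⁻¹ * g) • x = x
      rw [mul_smul, ← hax, inv_smul_smul]
  -- part (c)
  have partc : ∀ n : ℕ, 1 ≤ n →
      {g : G | ∃ a ∈ A, a ^ n = g} = (A : Set G) ∨
      {g : G | ∃ a ∈ A, a ^ n = g} = {1} := by
    intro n hn
    -- the set of n-th powers is a normal subgroup
    set S : Set G := {g : G | ∃ a ∈ A, a ^ n = g} with hS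
    have hSA : ∀ g ∈ S, g ∈ A := by
      rintro g ⟨a, ha, rfl⟩
      exact A.pow_mem ha n
    let N : Subgroup G :=
      { carrier := S
        mul_mem' := by
          rintro a b ⟨a', ha', rfl⟩ ⟨b', hb', rfl⟩
          exact ⟨a' * b', A.mul_mem ha' hb', (hAcomm a' ha' b' hb').mul_pow n⟩
        one_mem' := ⟨1, A.one_mem, one_pow n⟩
        inv_mem' := by
          rintro a ⟨a', ha', rfl⟩
          exact ⟨a'⁻¹, A.inv_mem ha', by rw [inv_pow]⟩ }
    have hNnorm : N.Normal := by
      constructor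
      rintro m ⟨a, ha, rfl⟩ g
      exact ⟨g * a * g⁻¹, hA.conj_mem a ha g, by rw [conj_pow]⟩
    by_cases hmoves : ∃ m ∈ N, ∃ x : X, m • x ≠ x
    · left
      obtain ⟨m, hm, x, hmx⟩ := hmoves
      have htN := key N hNnorm m hm x hmx
      have hsub := sub_eq N hSA htN
      ext g
      exact ⟨fun hg => hSA g hg, fun hg => hsub g hg⟩
    · right
      push_neg at hmoves
      ext g
      simp only [Set.mem_singleton_iff]
      constructor
      · intro hg
        exact hfaithful g (hmoves g hg)
      · rintro rfl
        exact ⟨1, A.one_mem, one_pow n⟩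
  refine ⟨parta, partb, partc, ?_⟩
  -- part (d)
  by_cases hp : ∃ p : ℕ, p.Prime ∧ ∃ a ∈ A, a ≠ 1 ∧ a ^ p = 1
  · right
    obtain ⟨p, hpp, a, haA, hane, hap⟩ := hp
    -- the p-torsion subgroup of A
    let T : Subgroup G :=
      { carrier := {g : G | g ∈ A ∧ g ^ p = 1}
        mul_mem' := by
          rintro x y ⟨hx, hxp⟩ ⟨hy, hyp⟩
          exact ⟨A.mul_mem hx hy, by
            rw [(hAcomm x hx y hy).mul_pow, hxp, hyp, one_mul]⟩
        one_mem' := ⟨A.one_mem, one_pow p⟩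
        inv_mem' := by
          rintro x ⟨hx, hxp⟩
          exact ⟨A.inv_mem hx, by rw [inv_pow, hxp, inv_one]⟩ }
    have hTnorm : T.Normal := by
      constructor
      rintro m ⟨hmA, hmp⟩ g
      exact ⟨hA.conj_mem m hmA g, by rw [conj_pow, hmp, mul_one, mul_inv_cancel]⟩
    have haT : a ∈ T := ⟨haA, hap⟩
    obtain ⟨x, hax⟩ : ∃ x : X, a • x ≠ x := by
      by_contra h
      push_neg at h
      exact hane (hfaithful a h)
    have htT := key T hTnorm a haT x hax
    have hsub := sub_eq T (fun g hg => hg.1) htT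
    exact ⟨p, hpp, fun b hb => (hsub b hb).2⟩
  · left
    push_neg at hp
    -- torsion-free
    have htf : ∀ a ∈ A, ∀ n : ℕ, 1 ≤ n → a ^ n = 1 → a = 1 := by
      intro a ha n
      induction n using Nat.strong_induction_on with
      | _ n ih =>
        intro hn han
        by_contra hane
        rcases eq_or_lt_of_le hn with h1 | h1
        · rw [← h1, pow_one] at han
          exact hane han
        · obtain ⟨q, hq, hqd⟩ := Nat.exists_prime_and_dvd (n := n) (by omega)
          obtain ⟨k, rfl⟩ := hqd
          have hk1 : 1 ≤ k := by
            rcases Nat.eq_zero_or_pos k with h | h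
            · subst h; simp at hn
            · exact h
          have hakq : (a ^ k) ^ q = 1 := by rw [← pow_mul, mul_comm]; exact han
          have hak : a ^ k = 1 := by
            by_contra h
            exact hp q hq (a ^ k) (A.pow_mem ha k) h hakq
          have hkn : k < q * k := by
            have := hq.two_le
            nlinarith
          exact hane (ih k hkn hk1 hak)
    refine ⟨?_, htf⟩
    intro n hn b hb
    rcases partc n hn with h | h
    · have : b ∈ {g : G | ∃ a ∈ A, a ^ n = g} := by rw [h]; exact hb
      exact this
    · exfalso
      have : a0 ^ n ∈ {g : G | ∃ a ∈ A, a ^ n = g} := ⟨a0, ha0A, rfl⟩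
      rw [h, Set.mem_singleton_iff] at this
      exact ha0 (htf a0 ha0A n hn this)
end

section
/- Let L be a first-order language and M an L-structure. For j = 1, 2, let dim_j assign a natural number to every nonempty subset of M^m (for every m ≥ 1) that is definable in M with parameters, and assume each dim_j satisfies: (union) dim_j(X ∪ Y) = max(dim_j(X), dim_j(Y)) for nonempty definable X, Y ⊆ M^m; (fiber additivity) for every k ≥ 1 and every nonempty definable Y ⊆ M^{1+k}, if there is N ∈ ℕ such that every nonempty fiber {a ∈ M : (a, b) ∈ Y} (for b ∈ M^k) has dim_j equal to N, then dim_j(Y) = N + dim_j(π(Y)), where π(Y) ⊆ M^k is the projection of Y forgetting the first coordinate. Suppose that dim_1(X) = dim_2(X) for every nonempty definable subset X of M^1, and that dim_1 is definable: for every L-formula φ(x, y_1, …, y_k) without parameters (with x a single variable), there are finitely many distinct natural numbers N_1, …, N_n and ∅-definable sets S_1, …, S_n ⊆ M^k partitioning {b ∈ M^k : φ(M, b) ≠ ∅}, such that dim_1(φ(M, b)) = N_i whenever b ∈ S_i, where φ(M, b) = {a ∈ M : M ⊨ φ(a, b)}. Then dim_1 and dim_2 coincide: dim_1(Y) = dim_2(Y)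 for every m ≥ 1 and every nonempty definable subset Y ⊆ M^m. -/
open FirstOrder

/-- The axioms required of an integer-valued dimension `d` on nonempty definable subsets of
the finite powers `M^m` of an `L`-structure `M` (definability with parameters is
definability over `Set.univ`):
* (union) `d (X ∪ Y) = max (d X) (d Y)` for nonempty definable `X, Y ⊆ M^m`;
* (fiber additivity) for `k ≥ 1` and nonempty definable `Y ⊆ M^{1+k}`, if there is `N`
  such that every nonempty fiber of `Y` over `b ∈ M^k` (a subset of `M^1`) has dimension
  `N`, then `d Y = N + d (π Y)` where `π Y ⊆ M^k` is the projection forgetting the first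
  coordinate. -/
def DimAxioms (L : FirstOrder.Language) (M : Type*) [L.Structure M]
    (d : ∀ m : ℕ, Set (Fin m → M) → ℕ) : Prop :=
  (∀ (m : ℕ) (X Y : Set (Fin m → M)),
      (Set.univ : Set M).Definable L X → (Set.univ : Set M).Definable L Y →
      X.Nonempty → Y.Nonempty → d m (X ∪ Y) = max (d m X) (d m Y)) ∧
  (∀ k : ℕ, 1 ≤ k → ∀ Y : Set (Fin (1 + k) → M),
      (Set.univ : Set M).Definable L Y → Y.Nonempty →
      ∀ N : ℕ,
        (∀ b : Fin k → M, {a : Fin 1 → M | Fin.append a b ∈ Y}.Nonempty →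
          d 1 {a : Fin 1 → M | Fin.append a b ∈ Y} = N) →
        d (1 + k) Y = N + d k {b : Fin k → M | ∃ a : Fin 1 → M, Fin.append a b ∈ Y})

section helpers
open FirstOrder.Language
variable {L : FirstOrder.Language} {M : Type*} [L.Structure M]

private lemma exists_fin_formula {α : Type*} {s : Set (α → M)}
    (h : (Set.univ : Set M).Definable L s) :
    ∃ (l : ℕ) (φ : L.Formula (α ⊕ Fin l)) (c : Fin l → M),
      s = {v | φ.Realize (Sum.elim v c)} := by
  classical
  rw [Set.definable_iff_finitely_definable] at h
  obtain ⟨A0, -, h⟩ := h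
  rw [Set.definable_iff_exists_formula_sum] at h
  obtain ⟨φ, rfl⟩ := h
  let e := Fintype.equivFin ↥(A0 : Set M)
  refine ⟨_, φ.relabel (Sum.elim (Sum.inr ∘ e) Sum.inl), Subtype.val ∘ e.symm, ?_⟩
  ext v
  have hval : Sum.elim (Subtype.val) v =
      (Sum.elim v (Subtype.val ∘ e.symm)) ∘ (Sum.elim (Sum.inr ∘ e) Sum.inl) := by
    funext x; rcases x with x | x <;> simp
  rw [Set.mem_setOf_eq, Set.mem_setOf_eq, Formula.realize_relabel, ← hval]

private lemma append_eq_elim {p q : ℕ} (a : Fin p → M) (c : Fin q → M) :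
    Fin.append a c = Sum.elim a c ∘ finSumFinEquiv.symm := by
  funext i
  refine Fin.addCases (fun j => ?_) (fun j => ?_) i <;>
    simp [Fin.append_left, Fin.append_right]

private lemma definable_fix_snd {p q : ℕ} {Z : Set (Fin (p + q) → M)}
    (hZ : (Set.univ : Set M).Definable L Z) (c : Fin q → M) :
    (Set.univ : Set M).Definable L {a : Fin p → M | Fin.append a c ∈ Z} := by
  obtain ⟨σ, hσ⟩ := hZ
  refine ⟨BoundedFormula.subst (σ.relabel ⇑finSumFinEquiv.symm)
      (Sum.elim Term.var (fun j => (L.con ⟨c j, Set.mem_univ _⟩).term)), ?_⟩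
  ext a
  rw [hσ]
  simp only [Set.mem_setOf_eq, Formula.Realize, BoundedFormula.realize_subst]
  have hval : (fun x => Term.realize a (Sum.elim Term.var
      (fun j => (L.con (⟨c j, Set.mem_univ _⟩ : (Set.univ : Set M))).term) x)) = Sum.elim a c := by
    funext x; rcases x with x | x <;> simp
  rw [hval]
  show Formula.Realize σ (Fin.append a c) ↔
    Formula.Realize (σ.relabel ⇑finSumFinEquiv.symm) (Sum.elim a c)
  rw [Formula.realize_relabel, ← append_eq_elim]

end helpers

/-- Let `M` be an `L`-structure and let `dim₁`, `dim₂` be two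
integer-valued dimensions on nonempty definable subsets of the powers of `M`, each
satisfying the union and fiber-additivity axioms.  Suppose `dim₁ X = dim₂ X` for every
nonempty definable `X ⊆ M^1`, and `dim₁` is definable: for every parameter-free formula
`φ(x, y₁, …, y_k)` there are finitely many distinct natural numbers `N 1, …, N n` and
`∅`-definable sets `S 1, …, S n ⊆ M^k` partitioning `{b : φ(M, b) ≠ ∅}` with
`dim₁ (φ(M, b)) = N i` whenever `b ∈ S i`.  Then `dim₁ Y = dim₂ Y` for every `m ≥ 1` and
every nonempty definable `Y ⊆ M^m`. -/
theorem stmt16 {L : FirstOrder.Language} {M : Type*} [L.Structure M]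
    (d₁ d₂ : ∀ m : ℕ, Set (Fin m → M) → ℕ)
    (hax₁ : DimAxioms L M d₁) (hax₂ : DimAxioms L M d₂)
    (hagree : ∀ X : Set (Fin 1 → M),
      (Set.univ : Set M).Definable L X → X.Nonempty → d₁ 1 X = d₂ 1 X)
    (hdef : ∀ (k : ℕ) (φ : L.Formula (Fin 1 ⊕ Fin k)),
      ∃ (n : ℕ) (N : Fin n → ℕ) (S : Fin n → Set (Fin k → M)),
        Function.Injective N ∧
        (∀ i, (∅ : Set M).Definable L (S i)) ∧
        (∀ i j, i ≠ j → Disjoint (S i) (S j)) ∧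
        (∀ b : Fin k → M,
          {a : Fin 1 → M | φ.Realize (Sum.elim a b)}.Nonempty ↔ ∃ i, b ∈ S i) ∧
        (∀ i, ∀ b ∈ S i, d₁ 1 {a : Fin 1 → M | φ.Realize (Sum.elim a b)} = N i)) :
    ∀ m : ℕ, 1 ≤ m → ∀ Y : Set (Fin m → M),
      (Set.univ : Set M).Definable L Y → Y.Nonempty → d₁ m Y = d₂ m Y := by
  classical
  obtain ⟨hu₁, hf₁⟩ := hax₁
  obtain ⟨hu₂, hf₂⟩ := hax₂
  intro m
  induction m using Nat.strong_induction_on with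
  | _ m IH =>
    intro hm Y hY hYne
    rcases Nat.lt_or_ge m 2 with h2 | h2
    · obtain rfl : m = 1 := by omega
      exact hagree Y hY hYne
    · obtain ⟨k, rfl⟩ : ∃ k, m = 1 + k := ⟨m - 1, by omega⟩
      have hk : 1 ≤ k := by omega
      have hklt : k < 1 + k := by omega
      obtain ⟨l, φ, c, hφ⟩ := exists_fin_formula hY
      set r : (Fin (1 + k) ⊕ Fin l) → (Fin 1 ⊕ Fin (k + l)) :=
        Sum.elim (fun i => Sum.map id (fun j => Fin.castAdd l j) (finSumFinEquiv.symm i))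
          (fun j => Sum.inr (Fin.natAdd k j)) with hr
      set ψ : L.Formula (Fin 1 ⊕ Fin (k + l)) := φ.relabel r with hψdef
      have happ_tail : ∀ (a : Fin 1 → M) (b : Fin k → M),
          (Fin.append a b) ∘ Fin.natAdd 1 = b := by
        intro a b; funext j; exact Fin.append_right _ _ _
      have hψ : ∀ (a : Fin 1 → M) (b : Fin k → M),
          ψ.Realize (Sum.elim a (Fin.append b c)) ↔ Fin.append a b ∈ Y := by
        intro a b
        have hval : (Sum.elim a (Fin.append b c)) ∘ r = Sum.elim (Fin.append a b) c := by
          funext x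
          rcases x with i | j
          · refine Fin.addCases (fun i₀ => ?_) (fun i₁ => ?_) i <;>
              simp [hr, Fin.append_left, Fin.append_right]
          · simp [hr, Fin.append_right]
        rw [hφ, hψdef, Language.Formula.realize_relabel, hval]
        rfl
      obtain ⟨n, N, S, -, hSdef, -, hpart, hdim⟩ := hdef (k + l) ψ
      set F : (Fin k → M) → Set (Fin 1 → M) := fun b => {a | Fin.append a b ∈ Y} with hFdef
      have hF : ∀ b, {a : Fin 1 → M | ψ.Realize (Sum.elim a (Fin.append b c))} = F b := by
        intro b; ext a; exact hψ a b
      set T : Fin n → Set (Fin k → M) := fun i => {b | Fin.append b c ∈ S i} with hTdef'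
      have hTdef : ∀ i, (Set.univ : Set M).Definable L (T i) :=
        fun i => definable_fix_snd ((hSdef i).mono (Set.empty_subset _)) c
      set Z : Fin n → Set (Fin (1 + k) → M) :=
        fun i => Y ∩ ((fun v : Fin (1 + k) → M => v ∘ Fin.natAdd 1) ⁻¹' T i) with hZdef'
      have hZdef : ∀ i, (Set.univ : Set M).Definable L (Z i) :=
        fun i => hY.inter ((hTdef i).preimage_comp (Fin.natAdd 1))
      have hFne : ∀ i, ∀ b ∈ T i, (F b).Nonempty := by
        intro i b hb
        rw [← hF b]
        exact (hpart (Fin.append b c)).2 ⟨i, hb⟩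
      have hfib : ∀ i b, {a : Fin 1 → M | Fin.append a b ∈ Z i} =
          if b ∈ T i then F b else ∅ := by
        intro i b
        ext a
        by_cases hb : b ∈ T i <;>
          simp [hZdef', hFdef, Set.mem_setOf_eq, happ_tail a b, hb]
      have hproj : ∀ i, {b : Fin k → M | ∃ a : Fin 1 → M, Fin.append a b ∈ Z i} = T i := by
        intro i
        ext b
        constructor
        · rintro ⟨a, -, ha2⟩
          rwa [Set.mem_preimage, happ_tail a b] at ha2
        · intro hb
          obtain ⟨a, ha⟩ := hFne i b hb
          exact ⟨a, ha, by rwa [Set.mem_preimage, happ_tail a b]⟩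
      have hfibdim : ∀ i, ∀ b ∈ T i, d₁ 1 (F b) = N i := by
        intro i b hb
        rw [← hF b]; exact hdim i (Fin.append b c) hb
      have hFd : ∀ b, (Set.univ : Set M).Definable L (F b) :=
        fun b => definable_fix_snd hY b
      have hfibdim₂ : ∀ i, ∀ b ∈ T i, d₂ 1 (F b) = N i := by
        intro i b hb
        rw [← hagree (F b) (hFd b) (hFne i b hb)]; exact hfibdim i b hb
      -- per-piece equality
      have hpiece : ∀ i, (Z i).Nonempty → d₁ (1 + k) (Z i) = d₂ (1 + k) (Z i) := by
        intro i hne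
        have hTne : (T i).Nonempty := by
          obtain ⟨v, hv⟩ := hne
          exact ⟨v ∘ Fin.natAdd 1, hv.2⟩
        have hfib1 : ∀ b : Fin k → M, {a : Fin 1 → M | Fin.append a b ∈ Z i}.Nonempty →
            d₁ 1 {a : Fin 1 → M | Fin.append a b ∈ Z i} = N i := by
          intro b hbne
          rw [hfib i b] at hbne ⊢
          by_cases hb : b ∈ T i
          · rw [if_pos hb]; exact hfibdim i b hb
          · rw [if_neg hb] at hbne; exact absurd hbne (by simp)
        have hfib2 : ∀ b : Fin k → M, {a : Fin 1 → M | Fin.append a b ∈ Z i}.Nonempty →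
            d₂ 1 {a : Fin 1 → M | Fin.append a b ∈ Z i} = N i := by
          intro b hbne
          rw [hfib i b] at hbne ⊢
          by_cases hb : b ∈ T i
          · rw [if_pos hb]; exact hfibdim₂ i b hb
          · rw [if_neg hb] at hbne; exact absurd hbne (by simp)
        have e1 := hf₁ k hk (Z i) (hZdef i) hne (N i) hfib1
        have e2 := hf₂ k hk (Z i) (hZdef i) hne (N i) hfib2
        rw [e1, e2, hproj i, IH k hklt hk (T i) (hTdef i) hTne]
      -- Y is the union of the nonempty pieces
      have hsplit : ∀ v : Fin (1 + k) → M,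
          Fin.append (v ∘ Fin.castAdd k) (v ∘ Fin.natAdd 1) = v := by
        intro v; funext i
        refine Fin.addCases (fun j => ?_) (fun j => ?_) i <;>
          simp [Fin.append_left, Fin.append_right]
      set J : Finset (Fin n) := Finset.univ.filter (fun i => (Z i).Nonempty) with hJdef
      have hYeq : Y = ⋃ i ∈ J, Z i := by
        ext v
        simp only [Set.mem_iUnion, hJdef, Finset.mem_filter, Finset.mem_univ, true_and]
        constructor
        · intro hv
          have hvF : (F (v ∘ Fin.natAdd 1)).Nonempty :=
            ⟨v ∘ Fin.castAdd k, by simp only [hFdef, Set.mem_setOf_eq, hsplit v]; exact hv⟩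
          rw [← hF _] at hvF
          obtain ⟨i, hi⟩ := (hpart _).1 hvF
          have hvZ : v ∈ Z i := ⟨hv, hi⟩
          exact ⟨i, ⟨v, hvZ⟩, hvZ⟩
        · rintro ⟨i, -, hv⟩
          exact hv.1
      have hJne : J.Nonempty := by
        obtain ⟨v, hv⟩ := hYne
        rw [hYeq] at hv
        simp only [Set.mem_iUnion] at hv
        obtain ⟨i, hi, -⟩ := hv
        exact ⟨i, hi⟩
      have hJprop : ∀ i ∈ J, (Z i).Nonempty := by
        intro i hi
        simpa [hJdef] using hi
      -- finite union induction
      have main : ∀ s : Finset (Fin n), s.Nonempty → (∀ i ∈ s, (Z i).Nonempty) →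
          ((Set.univ : Set M).Definable L (⋃ i ∈ s, Z i) ∧ (⋃ i ∈ s, Z i).Nonempty ∧
            d₁ (1 + k) (⋃ i ∈ s, Z i) = d₂ (1 + k) (⋃ i ∈ s, Z i)) := by
        intro s hs
        induction hs using Finset.Nonempty.cons_induction with
        | singleton a =>
          intro h
          have ha := h a (Finset.mem_singleton_self a)
          rw [Finset.set_biUnion_singleton]
          exact ⟨hZdef a, ha, hpiece a ha⟩
        | cons a s ha hsne ih =>
          intro h
          have hha := h a (Finset.mem_cons_self a s)
          have hrest := ih (fun i hi => h i (Finset.mem_cons_of_mem hi))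
          rw [Finset.cons_eq_insert, Finset.set_biUnion_insert]
          obtain ⟨hdef', hne', heq'⟩ := hrest
          refine ⟨(hZdef a).union hdef', hha.mono Set.subset_union_left, ?_⟩
          rw [hu₁ (1 + k) (Z a) _ (hZdef a) hdef' hha hne',
            hu₂ (1 + k) (Z a) _ (hZdef a) hdef' hha hne', hpiece a hha, heq']
      rw [hYeq]
      exact (main J hJne hJprop).2.2
end
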